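/- For |q|<1 and complex x, ∑_{j,k,ℓ≥0} (x;q²)_k x^{j+ℓ} (−1)^{j+k} q^{(j+k+ℓ)(j+k+ℓ−1)+ℓ²+j+k+2ℓ} / ((q;q)_j (q²;q²)_k (q²;q²)_ℓ) = (q;q²)_∞ (q²x;q²)_∞. -/

import Mathlib

/-!
Write `Q = q²` and `N = j + k + l`. The exponent of `q` is `N² + l² + l`, so the sum is
`∑_N (-1)^N q^(N²) c_N`, where `c_N` is the `N`-th coefficient of the product of the power series
`∑ x^j X^j / (q;q)_j`, `∑ (x;Q)_k X^k / (Q;Q)_k` and `∑ (-x)^l q^(l²+l) X^l / (Q;Q)_l`.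
Each factor satisfies a first order `Q`-difference equation, and such an equation determines a power
series from its constant term when `Q` is not a root of unity. Comparing equations shows that the
product equals `(∑ (xq)^p (q;Q)_p X^p / (Q;Q)_p) · (∑ X^s / (Q;Q)_s)`. Splitting
`q^((p+s)²) = q^(p²) q^(2ps) q^(s²)`, the sum over `s` and then the sum over `p` are instances of
Euler's identity `∑ (-1)^n Q^(n choose 2) a^n / (Q;Q)_n = (a;Q)_∞`, which follows from the
functional equation `f(a) = (1 - a) f(Qa)` and the continuity of `f` at `0`. All rearrangements
are justified by absolute convergence: the weight `q^(N²)` beats the geometric growth of the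
coefficients.
-/

open scoped BigOperators

noncomputable def qp (a q : ℂ) (n : ℕ) : ℂ := ∏ i ∈ Finset.range n, (1 - a * q ^ i)

noncomputable def qpInf (a q : ℂ) : ℂ := ∏' i : ℕ, (1 - a * q ^ i)

open PowerSeries

lemma Nat.choose_two_add_choose_two_le (j k : ℕ) :
    j.choose 2 + k.choose 2 ≤ (j + k).choose 2 := by
  induction k with
  | zero => simp
  | succ k ih =>
    have h₁ : (j + k + 1).choose 2 = (j + k).choose 1 + (j + k).choose 2 :=
      Nat.choose_succ_succ' _ _
    have h₂ : (k + 1).choose 2 = k.choose 1 + k.choose 2 := Nat.choose_succ_succ' _ _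
    rw [Nat.choose_one_right] at h₁ h₂
    rw [← add_assoc, h₁, h₂]
    omega

lemma sq_pow_choose_two_mul_pow {M : Type*} [CommMonoid M] (q : M) (n : ℕ) :
    (q ^ 2) ^ n.choose 2 * q ^ n = q ^ (n ^ 2) := by
  rw [← pow_mul, ← pow_add]
  congr 1
  rcases n with _ | n
  · simp
  · rw [Nat.choose_two_right, Nat.mul_div_cancel' (Nat.even_mul_pred_self _).two_dvd,
      Nat.add_sub_cancel]
    ring

lemma summable_pow_mul_pow_choose_two {r : ℝ} (hr0 : 0 ≤ r) (hr : r < 1) (M : ℝ) :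
    Summable fun n : ℕ => M ^ n * r ^ n.choose 2 := by
  refine summable_of_ratio_norm_eventually_le (r := 2⁻¹) (by norm_num) ?_
  have hlim : Filter.Tendsto (fun n : ℕ => |M| * r ^ n) Filter.atTop (nhds 0) := by
    simpa using (tendsto_pow_atTop_nhds_zero_of_lt_one hr0 hr).const_mul |M|
  filter_upwards [hlim.eventually_le_const (by norm_num : (0 : ℝ) < 2⁻¹)] with n hn
  have hsucc : (n + 1).choose 2 = n.choose 1 + n.choose 2 := Nat.choose_succ_succ' _ _
  rw [hsucc, Nat.choose_one_right, pow_succ, pow_add, norm_mul, norm_mul, norm_mul, norm_mul]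
  calc ‖M ^ n‖ * ‖M‖ * (‖r ^ n‖ * ‖r ^ n.choose 2‖)
      = (|M| * r ^ n) * (‖M ^ n‖ * ‖r ^ n.choose 2‖) := by
        rw [Real.norm_eq_abs M, Real.norm_of_nonneg (pow_nonneg hr0 n)]; ring
    _ ≤ 2⁻¹ * (‖M ^ n‖ * ‖r ^ n.choose 2‖) := by gcongr

lemma not_isOfFinOrder_of_norm_lt_one {q : ℂ} (hq : ‖q‖ < 1) : ¬IsOfFinOrder q := fun h => by
  obtain ⟨n, hn, hpow⟩ := isOfFinOrder_iff_pow_eq_one.mp h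
  exact hq.ne (Complex.norm_eq_one_of_pow_eq_one hpow hn.ne')

lemma not_isOfFinOrder_sq {M : Type*} [Monoid M] {q : M} (hq : ¬IsOfFinOrder q) :
    ¬IsOfFinOrder (q ^ 2) := by
  simpa [isOfFinOrder_pow] using hq

section QPochhammer

variable {Q : ℂ}

@[simp] lemma qp_zero (a Q : ℂ) : qp a Q 0 = 1 := by simp [qp]

lemma qp_succ (a Q : ℂ) (n : ℕ) : qp a Q (n + 1) = qp a Q n * (1 - a * Q ^ n) :=
  Finset.prod_range_succ _ n

@[simp] lemma qp_zero_left (Q : ℂ) (n : ℕ) : qp 0 Q n = 1 := by simp [qp]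

lemma qp_self_ne_zero (hQ : ¬IsOfFinOrder Q) (n : ℕ) : qp Q Q n ≠ 0 := by
  refine Finset.prod_ne_zero_iff.mpr fun i _ h => hQ ?_
  exact isOfFinOrder_iff_pow_eq_one.mpr
    ⟨i + 1, i.succ_pos, by rw [pow_succ']; linear_combination -h⟩

lemma norm_qp_le (hQ : ‖Q‖ ≤ 1) (a : ℂ) (n : ℕ) :
    ‖qp a Q n‖ ≤ (1 + ‖a‖) ^ n := by
  rw [qp, norm_prod, ← Finset.card_range n, ← Finset.prod_const, Finset.card_range]
  refine Finset.prod_le_prod (fun i _ => norm_nonneg (1 - a * Q ^ i)) fun i _ => ?_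
  calc ‖1 - a * Q ^ i‖ ≤ ‖(1 : ℂ)‖ + ‖a * Q ^ i‖ := norm_sub_le _ _
    _ ≤ 1 + ‖a‖ := by
      rw [norm_one, norm_mul, norm_pow]
      gcongr
      exact mul_le_of_le_one_right (norm_nonneg a) (pow_le_one₀ (norm_nonneg Q) hQ)

lemma norm_inv_qp_self_le (hQ : ‖Q‖ < 1) (n : ℕ) :
    ‖(qp Q Q n)⁻¹‖ ≤ (1 - ‖Q‖)⁻¹ ^ n := by
  have hpos : 0 < 1 - ‖Q‖ := by linarith
  have hle : (1 - ‖Q‖) ^ n ≤ ‖qp Q Q n‖ := by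
    rw [qp, norm_prod, ← Finset.card_range n, ← Finset.prod_const, Finset.card_range]
    refine Finset.prod_le_prod (fun _ _ => hpos.le) fun i _ => ?_
    have : ‖Q * Q ^ i‖ ≤ ‖Q‖ := by
      rw [norm_mul, norm_pow]
      exact mul_le_of_le_one_right (norm_nonneg Q) (pow_le_one₀ (norm_nonneg Q) hQ.le)
    linarith [norm_sub_norm_le (1 : ℂ) (Q * Q ^ i), norm_one (α := ℂ)]
  rw [norm_inv, inv_pow]
  exact inv_anti₀ (pow_pos hpos n) hle

lemma multipliable_one_sub_mul_pow (hQ : ‖Q‖ < 1) (a : ℂ) :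
    Multipliable fun i : ℕ => 1 - a * Q ^ i := by
  have hs : Summable fun i : ℕ => -(a * Q ^ i) :=
    ((summable_geometric_of_norm_lt_one hQ).mul_left a).neg
  simpa only [← sub_eq_add_neg] using Complex.multipliable_one_add_of_summable hs

lemma tendsto_qp_qpInf (hQ : ‖Q‖ < 1) (a : ℂ) :
    Filter.Tendsto (qp a Q) Filter.atTop (nhds (qpInf a Q)) :=
  (multipliable_one_sub_mul_pow hQ a).hasProd.tendsto_prod_nat

lemma qp_mul_qpInf (hQ : ‖Q‖ < 1) (a : ℂ) (n : ℕ) :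
    qp a Q n * qpInf (a * Q ^ n) Q = qpInf a Q := by
  have hshift : (fun i => 1 - a * Q ^ (i + n)) = fun i => 1 - a * Q ^ n * Q ^ i := by
    ext i; ring
  have hf : Multipliable fun i => 1 - a * Q ^ (i + n) := by
    rw [hshift]; exact multipliable_one_sub_mul_pow hQ (a * Q ^ n)
  have h := Multipliable.prod_mul_tprod_nat_mul' (f := fun i => 1 - a * Q ^ i) hf
  rw [hshift] at h
  exact h

end QPochhammer

namespace PowerSeries

variable {R : Type*} [CommRing R]

@[simp] lemma rescale_C (a c : R) : rescale c (C a) = C a := by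
  ext n; rcases n with _ | n <;> simp [coeff_rescale, coeff_C]

@[simp] lemma constantCoeff_rescale (c : R) (f : R⟦X⟧) :
    constantCoeff (rescale c f) = constantCoeff f := by
  rw [← coeff_zero_eq_constantCoeff_apply, coeff_rescale, pow_zero, one_mul,
    coeff_zero_eq_constantCoeff_apply]

lemma rescale_C_mul_X (a c : R) : rescale c (C a * X) = C (a * c) * X := by
  rw [map_mul, rescale_C, rescale_X, map_mul, mul_assoc]

lemma rescale_mul_eq_mul_rescale {P S F : R⟦X⟧} {Q : R} (h : P * F = S * rescale Q F) (c : R) :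
    rescale c P * rescale c F = rescale c S * rescale Q (rescale c F) := by
  rw [← map_mul, h, map_mul, rescale_rescale, rescale_rescale, mul_comm Q]

lemma coeff_mul_of_coeff_eq_zero {φ ψ : R⟦X⟧} {n : ℕ} (h : ∀ m < n, coeff m ψ = 0) :
    coeff n (φ * ψ) = constantCoeff φ * coeff n ψ := by
  rw [coeff_mul, Finset.sum_eq_single_of_mem (0, n) (by simp)]
  · simp
  · rintro ⟨i, j⟩ hij hne
    have : j < n := by
      rw [Finset.HasAntidiagonal.mem_antidiagonal] at hij
      rcases Nat.eq_zero_or_pos i with rfl | hi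
      · simp_all
      · omega
    rw [h j this, mul_zero]

theorem eq_of_mul_eq_mul_rescale [IsDomain R] {P S F G : R⟦X⟧} {Q : R} (hQ : ¬IsOfFinOrder Q)
    (hP : constantCoeff P = 1) (hS : constantCoeff S = 1)
    (hF : P * F = S * rescale Q F) (hG : P * G = S * rescale Q G)
    (h0 : constantCoeff F = constantCoeff G) : F = G := by
  rw [← sub_eq_zero]
  have hH : P * (F - G) = S * rescale Q (F - G) := by rw [map_sub, mul_sub, mul_sub, hF, hG]
  suffices ∀ n, coeff n (F - G) = 0 by ext n; simpa using this n
  intro n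
  induction n using Nat.strong_induction_on with
  | _ n ih =>
    have hn := congrArg (coeff n) hH
    rw [coeff_mul_of_coeff_eq_zero ih, coeff_mul_of_coeff_eq_zero (fun m hm => by
      rw [coeff_rescale, ih m hm, mul_zero]), coeff_rescale, hP, hS] at hn
    rcases Nat.eq_zero_or_pos n with rfl | hpos
    · simpa [sub_eq_zero] using h0
    · have hQn : 1 - Q ^ n ≠ 0 := sub_ne_zero.mpr fun h =>
        hQ (isOfFinOrder_iff_pow_eq_one.mpr ⟨n, hpos, h.symm⟩)
      exact (mul_eq_zero.mp (by linear_combination hn : (1 - Q ^ n) * coeff n (F - G) = 0))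
        |>.resolve_left hQn

end PowerSeries

noncomputable def qBinomialSeries (a Q : ℂ) : ℂ⟦X⟧ := mk fun n => qp a Q n / qp Q Q n

noncomputable def eulerSeries (Q : ℂ) : ℂ⟦X⟧ := mk fun n => Q ^ n.choose 2 / qp Q Q n

@[simp] lemma coeff_qBinomialSeries (a Q : ℂ) (n : ℕ) :
    coeff n (qBinomialSeries a Q) = qp a Q n / qp Q Q n := coeff_mk _ _

@[simp] lemma coeff_eulerSeries (Q : ℂ) (n : ℕ) :
    coeff n (eulerSeries Q) = Q ^ n.choose 2 / qp Q Q n := coeff_mk _ _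

@[simp] lemma constantCoeff_qBinomialSeries (a Q : ℂ) :
    constantCoeff (qBinomialSeries a Q) = 1 := by
  simp [← coeff_zero_eq_constantCoeff_apply]

@[simp] lemma constantCoeff_eulerSeries (Q : ℂ) : constantCoeff (eulerSeries Q) = 1 := by
  simp [← coeff_zero_eq_constantCoeff_apply]

section FunctionalEquations

variable {Q : ℂ}

lemma qBinomialSeries_functional_eq (hQ : ¬IsOfFinOrder Q) (a : ℂ) :
    (1 - X) * qBinomialSeries a Q = (1 - C a * X) * rescale Q (qBinomialSeries a Q) := by
  ext n
  rcases n with _ | n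
  · simp [coeff_mul, coeff_rescale]
  · have h₁ := qp_self_ne_zero hQ n
    have h₂ : 1 - Q ^ n * Q ≠ 0 := by
      have := qp_self_ne_zero hQ (n + 1)
      rw [qp_succ, mul_comm Q] at this
      exact right_ne_zero_of_mul this
    simp only [sub_mul, one_mul, map_sub, mul_assoc, coeff_C_mul, coeff_succ_X_mul, coeff_rescale,
      coeff_qBinomialSeries, qp_succ]
    rw [pow_succ']
    field_simp
    ring

lemma qBinomialSeries_zero_functional_eq (hQ : ¬IsOfFinOrder Q) :
    (1 - X) * qBinomialSeries 0 Q = 1 * rescale Q (qBinomialSeries 0 Q) := by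
  simpa using qBinomialSeries_functional_eq hQ 0

lemma rescale_qBinomialSeries_zero_functional_eq (hQ : ¬IsOfFinOrder Q) (c : ℂ) :
    (1 - C c * X) * rescale c (qBinomialSeries 0 Q)
      = 1 * rescale Q (rescale c (qBinomialSeries 0 Q)) := by
  simpa using rescale_mul_eq_mul_rescale (qBinomialSeries_zero_functional_eq hQ) c

lemma eulerSeries_functional_eq (hQ : ¬IsOfFinOrder Q) :
    eulerSeries Q = (1 + X) * rescale Q (eulerSeries Q) := by
  ext n
  rcases n with _ | n
  · simp [coeff_mul, coeff_rescale]
  · have h₁ := qp_self_ne_zero hQ n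
    have h₂ : 1 - Q * Q ^ n ≠ 0 := by
      have := qp_self_ne_zero hQ (n + 1)
      rw [qp_succ] at this
      exact right_ne_zero_of_mul this
    simp only [add_mul, one_mul, map_add, coeff_succ_X_mul, coeff_rescale,
      coeff_eulerSeries, qp_succ, Nat.choose_succ_succ', Nat.choose_one_right]
    field_simp
    ring

end FunctionalEquations

section Identities

variable {q : ℂ}

theorem rescale_qBinomialSeries_zero_mul_qBinomialSeries (hq : ¬IsOfFinOrder q) (x : ℂ) :
    rescale x (qBinomialSeries 0 q) * qBinomialSeries x (q ^ 2)
      = rescale (x * q) (qBinomialSeries 0 (q ^ 2)) * qBinomialSeries 0 (q ^ 2) := by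
  have hQ := not_isOfFinOrder_sq hq
  have hA := rescale_qBinomialSeries_zero_functional_eq hq x
  -- iterating the base-`q` equation of the first factor gives a base-`q²` equation
  have hA₂ := rescale_mul_eq_mul_rescale hA q
  rw [rescale_rescale _ q q, ← sq] at hA₂
  simp only [map_sub, map_one, rescale_C_mul_X] at hA₂
  have hB := qBinomialSeries_functional_eq hQ x
  have hD := rescale_qBinomialSeries_zero_functional_eq hQ (x * q)
  have hE := qBinomialSeries_zero_functional_eq hQ
  refine eq_of_mul_eq_mul_rescale hQ (P := (1 - C x * X) * (1 - C x * C q * X) * (1 - X))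
    (S := 1 - C x * X) (by simp) (by simp) ?_ ?_ (by simp)
  · simp only [map_mul] at hA₂ hD ⊢
    linear_combination ((1 - X) * qBinomialSeries x (q ^ 2)) * ((1 - C x * C q * X) * hA + hA₂)
      + rescale (q ^ 2) (rescale x (qBinomialSeries 0 q)) * hB
  · simp only [map_mul] at hA₂ hD ⊢
    linear_combination (1 - C x * X) * ((1 - X) * qBinomialSeries 0 (q ^ 2) * hD
      + rescale (q ^ 2) (rescale (x * q) (qBinomialSeries 0 (q ^ 2))) * hE)

theorem rescale_eulerSeries_mul_rescale_qBinomialSeries_zero (hq : ¬IsOfFinOrder q) :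
    rescale q (eulerSeries (q ^ 2)) * rescale (-1) (qBinomialSeries 0 (q ^ 2))
      = rescale (-1) (qBinomialSeries q (q ^ 2)) := by
  have hQ := not_isOfFinOrder_sq hq
  have hC := rescale_mul_eq_mul_rescale (S := 1 + X)
    (by rw [one_mul]; exact eulerSeries_functional_eq hQ) q
  have hE := rescale_mul_eq_mul_rescale (qBinomialSeries_zero_functional_eq hQ) (-1)
  have hG := rescale_mul_eq_mul_rescale (qBinomialSeries_functional_eq hQ q) (-1)
  simp only [map_add, map_sub, map_one, map_neg, map_mul, rescale_X, rescale_C] at hC hE hG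
  refine eq_of_mul_eq_mul_rescale hQ (P := 1 + X) (S := 1 + C q * X) (by simp) (by simp) ?_ ?_
    (by simp)
  · rw [map_mul]
    linear_combination rescale q (eulerSeries (q ^ 2)) * hE
      + rescale (q ^ 2) (rescale (-1) (qBinomialSeries 0 (q ^ 2))) * hC
  · linear_combination hG

theorem rescale_qBinomialSeries_zero_mul_qBinomialSeries_mul_rescale_eulerSeries
    (hq : ¬IsOfFinOrder q) (x : ℂ) :
    rescale x (qBinomialSeries 0 q) * qBinomialSeries x (q ^ 2)
        * rescale (-(x * q ^ 2)) (eulerSeries (q ^ 2))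
      = rescale (x * q) (qBinomialSeries q (q ^ 2)) * qBinomialSeries 0 (q ^ 2) := by
  have h := congrArg (rescale (-(x * q))) (rescale_eulerSeries_mul_rescale_qBinomialSeries_zero hq)
  simp only [map_mul, rescale_rescale] at h
  rw [show q * -(x * q) = -(x * q ^ 2) by ring, show -1 * -(x * q) = x * q by ring] at h
  rw [rescale_qBinomialSeries_zero_mul_qBinomialSeries hq x]
  linear_combination qBinomialSeries 0 (q ^ 2) * h

end Identities

section CoefficientBounds

variable {Q : ℂ}

lemma norm_coeff_qBinomialSeries_le (hQ : ‖Q‖ < 1) (a : ℂ) (n : ℕ) :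
    ‖coeff n (qBinomialSeries a Q)‖ ≤ ((1 + ‖a‖) * (1 - ‖Q‖)⁻¹) ^ n := by
  rw [coeff_qBinomialSeries, div_eq_mul_inv, norm_mul, mul_pow]
  exact mul_le_mul (norm_qp_le hQ.le a n) (norm_inv_qp_self_le hQ n) (norm_nonneg _)
    (by positivity)

lemma norm_coeff_eulerSeries_le (hQ : ‖Q‖ < 1) (n : ℕ) :
    ‖coeff n (eulerSeries Q)‖ ≤ (1 - ‖Q‖)⁻¹ ^ n * ‖Q‖ ^ n.choose 2 := by
  rw [coeff_eulerSeries, div_eq_mul_inv, norm_mul, norm_pow, mul_comm]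
  exact mul_le_mul_of_nonneg_right (norm_inv_qp_self_le hQ n) (by positivity)

lemma norm_coeff_rescale_le {f : ℂ⟦X⟧} {M : ℝ} (hf : ∀ n, ‖coeff n f‖ ≤ M ^ n) (c : ℂ)
    (n : ℕ) :
    ‖coeff n (rescale c f)‖ ≤ (‖c‖ * M) ^ n := by
  rw [coeff_rescale, norm_mul, norm_pow, mul_pow]
  gcongr
  exact hf n

end CoefficientBounds

section Euler

variable {Q : ℂ}

lemma summable_norm_coeff_eulerSeries_mul_pow (hQ : ‖Q‖ < 1) (R : ℝ) (hR : 0 ≤ R) :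
    Summable fun n : ℕ => ‖coeff n (eulerSeries Q)‖ * R ^ n := by
  refine (summable_pow_mul_pow_choose_two (norm_nonneg Q) hQ (R * (1 - ‖Q‖)⁻¹))
    |>.of_nonneg_of_le
    (fun n => by positivity) fun n => ?_
  calc ‖coeff n (eulerSeries Q)‖ * R ^ n
      ≤ (1 - ‖Q‖)⁻¹ ^ n * ‖Q‖ ^ n.choose 2 * R ^ n := by
        gcongr; exact norm_coeff_eulerSeries_le hQ n
    _ = (R * (1 - ‖Q‖)⁻¹) ^ n * ‖Q‖ ^ n.choose 2 := by ring

lemma summable_coeff_eulerSeries_mul_pow (hQ : ‖Q‖ < 1) (t : ℂ) :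
    Summable fun n => coeff n (eulerSeries Q) * t ^ n :=
  Summable.of_norm <| by
    simpa [norm_mul, norm_pow] using summable_norm_coeff_eulerSeries_mul_pow hQ _ (norm_nonneg t)

lemma HasSum.coeff_X_mul {R : Type*} [CommRing R] [TopologicalSpace R] [IsTopologicalRing R]
    {φ : R⟦X⟧} {t s : R} (h : HasSum (fun n => coeff n φ * t ^ n) s) :
    HasSum (fun n => coeff n (X * φ) * t ^ n) (t * s) := by
  rw [← hasSum_nat_add_iff' 1]
  have hshift :
      (fun n => coeff (n + 1) (X * φ) * t ^ (n + 1)) = fun n => t * (coeff n φ * t ^ n) := by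
    ext n; rw [coeff_succ_X_mul, pow_succ]; ring
  simpa only [hshift, Finset.range_one, Finset.sum_singleton, coeff_zero_X_mul, zero_mul,
    sub_zero] using h.mul_left t

lemma tsum_coeff_eulerSeries_mul_pow_eq (hQ : ‖Q‖ < 1) (t : ℂ) :
    ∑' n, coeff n (eulerSeries Q) * t ^ n
      = (1 + t) * ∑' n, coeff n (eulerSeries Q) * (Q * t) ^ n := by
  have h : HasSum (fun n => coeff n (rescale Q (eulerSeries Q)) * t ^ n)
      (∑' n, coeff n (eulerSeries Q) * (Q * t) ^ n) := by
    convert (summable_coeff_eulerSeries_mul_pow hQ (Q * t)).hasSum using 1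
    ext n; rw [coeff_rescale]; ring
  have h₂ : HasSum (fun n => coeff n ((1 + X) * rescale Q (eulerSeries Q)) * t ^ n)
      ((1 + t) * ∑' n, coeff n (eulerSeries Q) * (Q * t) ^ n) := by
    convert h.add h.coeff_X_mul using 1
    · ext n; rw [add_mul, one_mul, map_add, add_mul]
    · ring
  rw [← eulerSeries_functional_eq (not_isOfFinOrder_of_norm_lt_one hQ)] at h₂
  exact h₂.tsum_eq

theorem hasSum_coeff_eulerSeries_mul_pow (hQ : ‖Q‖ < 1) (t : ℂ) :
    HasSum (fun n => coeff n (eulerSeries Q) * t ^ n) (qpInf (-t) Q) := by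
  set g : ℂ → ℂ := fun s => ∑' n, coeff n (eulerSeries Q) * s ^ n
  have hstep : ∀ s, g s = (1 + s) * g (Q * s) := tsum_coeff_eulerSeries_mul_pow_eq hQ
  have hiter : ∀ N, g t = qp (-t) Q N * g (Q ^ N * t) := by
    intro N
    induction N with
    | zero => simp
    | succ N ih =>
      rw [ih, hstep (Q ^ N * t), qp_succ, ← mul_assoc Q, ← pow_succ']
      ring
  have hcont : ContinuousOn g (Metric.closedBall 0 ‖t‖) :=
    continuousOn_tsum (fun n => (continuous_const.mul (continuous_pow n)).continuousOn)
      (summable_norm_coeff_eulerSeries_mul_pow hQ ‖t‖ (norm_nonneg t)) fun n s hs => by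
        rw [norm_mul, norm_pow]
        gcongr
        simpa using hs
  have hsmall : Filter.Tendsto (fun N => Q ^ N * t) Filter.atTop
      (nhdsWithin 0 (Metric.closedBall 0 ‖t‖)) := by
    refine tendsto_nhdsWithin_iff.mpr ⟨?_, Filter.Eventually.of_forall fun N => ?_⟩
    · simpa using (tendsto_pow_atTop_nhds_zero_of_norm_lt_one hQ).mul_const t
    · simpa [norm_mul, norm_pow] using
        mul_le_of_le_one_left (norm_nonneg t) (pow_le_one₀ (norm_nonneg Q) hQ.le)
  have hg₀ : g 0 = 1 := by
    simp only [g]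
    rw [tsum_eq_single 0 fun n hn => by simp [hn]]
    simp
  have hlim := (tendsto_qp_qpInf hQ (-t)).mul
    ((hcont 0 (Metric.mem_closedBall_self (norm_nonneg t))).tendsto.comp hsmall)
  rw [hg₀, mul_one] at hlim
  rw [← tendsto_nhds_unique (tendsto_const_nhds.congr hiter) hlim]
  exact (summable_coeff_eulerSeries_mul_pow hQ t).hasSum

end Euler

theorem HasSum.finset_fiberwise {α β γ : Type*} [AddCommGroup α] [UniformSpace α]
    [IsUniformAddGroup α] [CompleteSpace α] [T2Space α] {f : β → α} {a : α}
    (hf : HasSum f a) (g : β → γ) (s : γ → Finset β) (hs : ∀ c b, b ∈ s c ↔ g b = c) :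
    HasSum (fun c => ∑ b ∈ s c, f b) a := by
  refine (hf.tsum_fiberwise g).congr_fun fun c => ?_
  have hset : (s c : Set β) = g ⁻¹' {c} := by ext b; simp [hs]
  rw [← Finset.tsum_subtype', hset]

section WeightedCauchyProduct

open Finset

variable {R : Type*} [CommRing R] [UniformSpace R] [IsUniformAddGroup R] [CompleteSpace R]
  [T2Space R] {w : ℕ → R} {φ ψ χ : R⟦X⟧} {a : R}

theorem HasSum.weighted_coeff_mul
    (h : HasSum (fun p : ℕ × ℕ => w (p.1 + p.2) * (coeff p.1 φ * coeff p.2 ψ)) a) :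
    HasSum (fun n => w n * coeff n (φ * ψ)) a := by
  refine (h.finset_fiberwise (fun p => p.1 + p.2) antidiagonal
    (fun _ _ => mem_antidiagonal)).congr_fun fun n => ?_
  rw [coeff_mul, mul_sum]
  exact sum_congr rfl fun p hp => by rw [mem_antidiagonal.mp hp]

theorem HasSum.weighted_coeff_mul_mul
    (h : HasSum (fun t : ℕ × ℕ × ℕ =>
      w (t.1 + t.2.1 + t.2.2) * (coeff t.1 φ * coeff t.2.1 ψ * coeff t.2.2 χ)) a) :
    HasSum (fun n => w n * coeff n (φ * ψ * χ)) a := by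
  have h₂ :
      HasSum (fun p : ℕ × ℕ => w (p.1 + p.2) * (coeff p.1 φ * coeff p.2 (ψ * χ))) a := by
    refine (h.finset_fiberwise (fun t => (t.1, t.2.1 + t.2.2))
      (fun p => {p.1} ×ˢ antidiagonal p.2) fun p t => ?_).congr_fun fun p => ?_
    · simp [Prod.ext_iff, eq_comm, and_comm]
    · rw [sum_product, sum_singleton, coeff_mul, mul_sum, mul_sum]
      refine sum_congr rfl fun kl hkl => ?_
      rw [add_assoc, mem_antidiagonal.mp hkl]
      ring
  simpa only [mul_assoc] using h₂.weighted_coeff_mul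

end WeightedCauchyProduct

section Summability

variable {R : Type*} [NormedCommRing R] [CompleteSpace R] {w : ℕ → R} {φ ψ χ : R⟦X⟧}
  {r M₁ M₂ M₃ : ℝ}

theorem summable_weighted_coeff_mul (hr0 : 0 ≤ r) (hr : r < 1)
    (hw : ∀ n, ‖w n‖ ≤ r ^ n.choose 2) (hφ : ∀ n, ‖coeff n φ‖ ≤ M₁ ^ n)
    (hψ : ∀ n, ‖coeff n ψ‖ ≤ M₂ ^ n) :
    Summable fun p : ℕ × ℕ => w (p.1 + p.2) * (coeff p.1 φ * coeff p.2 ψ) := by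
  have h₁ : 0 ≤ fun n : ℕ => M₁ ^ n * r ^ n.choose 2 :=
    fun n => mul_nonneg ((norm_nonneg _).trans (hφ n)) (pow_nonneg hr0 _)
  have h₂ : 0 ≤ fun n : ℕ => M₂ ^ n * r ^ n.choose 2 :=
    fun n => mul_nonneg ((norm_nonneg _).trans (hψ n)) (pow_nonneg hr0 _)
  refine Summable.of_norm_bounded ((summable_pow_mul_pow_choose_two hr0 hr M₁).mul_of_nonneg
    (summable_pow_mul_pow_choose_two hr0 hr M₂) h₁ h₂) fun ⟨j, k⟩ => ?_
  have hwjk : ‖w (j + k)‖ ≤ r ^ j.choose 2 * r ^ k.choose 2 := (hw _).trans <| by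
    rw [← pow_add]; exact pow_le_pow_of_le_one hr0 hr.le (Nat.choose_two_add_choose_two_le j k)
  calc ‖w (j + k) * (coeff j φ * coeff k ψ)‖
      ≤ r ^ j.choose 2 * r ^ k.choose 2 * (M₁ ^ j * M₂ ^ k) :=
        norm_mul_le_of_le hwjk (norm_mul_le_of_le (hφ j) (hψ k))
    _ = M₁ ^ j * r ^ j.choose 2 * (M₂ ^ k * r ^ k.choose 2) := by ring

theorem summable_weighted_coeff_mul_mul (hr0 : 0 ≤ r) (hr : r < 1)
    (hw : ∀ n, ‖w n‖ ≤ r ^ n.choose 2) (hφ : ∀ n, ‖coeff n φ‖ ≤ M₁ ^ n)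
    (hψ : ∀ n, ‖coeff n ψ‖ ≤ M₂ ^ n) (hχ : ∀ n, ‖coeff n χ‖ ≤ M₃ ^ n) :
    Summable fun t : ℕ × ℕ × ℕ =>
      w (t.1 + t.2.1 + t.2.2) * (coeff t.1 φ * coeff t.2.1 ψ * coeff t.2.2 χ) := by
  have h₁ : 0 ≤ fun n : ℕ => M₁ ^ n * r ^ n.choose 2 :=
    fun n => mul_nonneg ((norm_nonneg _).trans (hφ n)) (pow_nonneg hr0 _)
  have h₂ : 0 ≤ fun n : ℕ => M₂ ^ n * r ^ n.choose 2 :=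
    fun n => mul_nonneg ((norm_nonneg _).trans (hψ n)) (pow_nonneg hr0 _)
  have h₃ : 0 ≤ fun n : ℕ => M₃ ^ n * r ^ n.choose 2 :=
    fun n => mul_nonneg ((norm_nonneg _).trans (hχ n)) (pow_nonneg hr0 _)
  refine Summable.of_norm_bounded ((summable_pow_mul_pow_choose_two hr0 hr M₁).mul_of_nonneg
    ((summable_pow_mul_pow_choose_two hr0 hr M₂).mul_of_nonneg
      (summable_pow_mul_pow_choose_two hr0 hr M₃) h₂ h₃) h₁
    fun _ => mul_nonneg (h₂ _) (h₃ _))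
    fun ⟨j, k, l⟩ => ?_
  have hexp : j.choose 2 + k.choose 2 + l.choose 2 ≤ (j + k + l).choose 2 := by
    linarith [Nat.choose_two_add_choose_two_le j k, Nat.choose_two_add_choose_two_le (j + k) l]
  have hwjkl : ‖w (j + k + l)‖ ≤ r ^ j.choose 2 * r ^ k.choose 2 * r ^ l.choose 2 :=
    (hw _).trans (by rw [← pow_add, ← pow_add]; exact pow_le_pow_of_le_one hr0 hr.le hexp)
  calc ‖w (j + k + l) * (coeff j φ * coeff k ψ * coeff l χ)‖
      ≤ r ^ j.choose 2 * r ^ k.choose 2 * r ^ l.choose 2 * (M₁ ^ j * M₂ ^ k * M₃ ^ l) :=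
        norm_mul_le_of_le hwjkl (norm_mul_le_of_le (norm_mul_le_of_le (hφ j) (hψ k)) (hχ l))
    _ = M₁ ^ j * r ^ j.choose 2 * (M₂ ^ k * r ^ k.choose 2 * (M₃ ^ l * r ^ l.choose 2)) := by
        ring

end Summability

section Assembly

variable {q : ℂ}

lemma norm_neg_one_pow_mul_pow_sq_le (hq : ‖q‖ < 1) (n : ℕ) :
    ‖(-1) ^ n * q ^ (n ^ 2)‖ ≤ ‖q‖ ^ n.choose 2 := by
  rw [norm_mul, norm_pow, norm_neg, norm_one, one_pow, one_mul, norm_pow]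
  exact pow_le_pow_of_le_one (norm_nonneg q) hq.le (Nat.choose_le_pow n 2)

lemma summand_eq_weighted_coeff (q x : ℂ) (j k l : ℕ) :
    qp x (q^2) k * x ^ (j + l) * (-1) ^ (j + k)
        * q ^ (((j:ℤ)+(k:ℤ)+(l:ℤ)) * ((j:ℤ)+(k:ℤ)+(l:ℤ)-1) + (l:ℤ)^2 + (j:ℤ) + (k:ℤ) + 2*(l:ℤ))
        / (qp q q j * qp (q^2) (q^2) k * qp (q^2) (q^2) l)
      = (-1) ^ (j + k + l) * q ^ ((j + k + l) ^ 2)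
        * (coeff j (rescale x (qBinomialSeries 0 q)) * coeff k (qBinomialSeries x (q ^ 2))
          * coeff l (rescale (-(x * q ^ 2)) (eulerSeries (q ^ 2)))) := by
  have hexp :
      ((j:ℤ)+(k:ℤ)+(l:ℤ)) * ((j:ℤ)+(k:ℤ)+(l:ℤ)-1) + (l:ℤ)^2 + (j:ℤ) + (k:ℤ) + 2*(l:ℤ)
      = (((j + k + l) ^ 2 + l ^ 2 + l : ℕ) : ℤ) := by push_cast; ring
  have hsign : (-1 : ℂ) ^ (j + k + l) * (-1) ^ l = (-1) ^ (j + k) := by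
    rw [pow_add, mul_assoc, ← pow_add, ← two_mul, pow_mul, neg_one_sq, one_pow, mul_one]
  rw [hexp, zpow_natCast, pow_add q, pow_add q, ← sq_pow_choose_two_mul_pow q l, ← hsign]
  simp only [coeff_rescale, coeff_qBinomialSeries, coeff_eulerSeries, qp_zero_left]
  ring

lemma hasSum_weighted_coeff_qBinomialSeries (hq : ‖q‖ < 1) (x : ℂ) (p : ℕ) :
    HasSum (fun s => (-1) ^ (p + s) * q ^ ((p + s) ^ 2)
        * (coeff p (rescale (x * q) (qBinomialSeries q (q ^ 2)))
          * coeff s (qBinomialSeries 0 (q ^ 2))))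
      (qpInf q (q ^ 2) * (coeff p (eulerSeries (q ^ 2)) * (-(q ^ 2 * x)) ^ p)) := by
  have hQ : ‖q ^ 2‖ < 1 := by rw [norm_pow]; exact pow_lt_one₀ (norm_nonneg q) hq two_ne_zero
  set c := (-1) ^ p * q ^ (p ^ 2) * coeff p (rescale (x * q) (qBinomialSeries q (q ^ 2)))
  have hsplit : ∀ s, (-1) ^ (p + s) * q ^ ((p + s) ^ 2)
        * (coeff p (rescale (x * q) (qBinomialSeries q (q ^ 2)))
          * coeff s (qBinomialSeries 0 (q ^ 2)))
      = c * (coeff s (eulerSeries (q ^ 2)) * (-(q * (q ^ 2) ^ p)) ^ s) := fun s => by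
    simp only [c, coeff_qBinomialSeries, coeff_eulerSeries, qp_zero_left]
    rw [show (p + s) ^ 2 = p ^ 2 + 2 * p * s + s ^ 2 by ring, pow_add q,
      ← sq_pow_choose_two_mul_pow q s]
    ring
  have hval : c * qpInf (-(-(q * (q ^ 2) ^ p))) (q ^ 2)
      = qpInf q (q ^ 2) * (coeff p (eulerSeries (q ^ 2)) * (-(q ^ 2 * x)) ^ p) := by
    simp only [c, coeff_rescale, coeff_qBinomialSeries, coeff_eulerSeries]
    rw [neg_neg, ← qp_mul_qpInf hQ q p, ← sq_pow_choose_two_mul_pow q p]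
    ring
  rw [← hval]
  exact ((hasSum_coeff_eulerSeries_mul_pow hQ _).mul_left c).congr_fun hsplit

theorem hasSum_weighted_coeff_qBinomialSeries_mul (hq : ‖q‖ < 1) (x : ℂ) :
    HasSum (fun p : ℕ × ℕ => (-1) ^ (p.1 + p.2) * q ^ ((p.1 + p.2) ^ 2)
        * (coeff p.1 (rescale (x * q) (qBinomialSeries q (q ^ 2)))
          * coeff p.2 (qBinomialSeries 0 (q ^ 2))))
      (qpInf q (q ^ 2) * qpInf (q ^ 2 * x) (q ^ 2)) := by
  have hQ : ‖q ^ 2‖ < 1 := by rw [norm_pow]; exact pow_lt_one₀ (norm_nonneg q) hq two_ne_zero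
  have hsum := summable_weighted_coeff_mul (norm_nonneg q) hq (norm_neg_one_pow_mul_pow_sq_le hq)
    (norm_coeff_rescale_le (norm_coeff_qBinomialSeries_le hQ q) (x * q))
    (norm_coeff_qBinomialSeries_le hQ 0)
  have hval := ((hasSum_coeff_eulerSeries_mul_pow hQ (-(q ^ 2 * x))).mul_left
    (qpInf q (q ^ 2))).tsum_eq
  rw [neg_neg] at hval
  rw [← hval, ← tsum_congr fun p => (hasSum_weighted_coeff_qBinomialSeries hq x p).tsum_eq,
    ← hsum.tsum_prod]
  exact hsum.hasSum

end Assembly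

theorem stmt13 (q x : ℂ) (hq : ‖q‖ < 1) :
    (∑' j : ℕ, ∑' k : ℕ, ∑' l : ℕ,
      qp x (q^2) k * x ^ (j + l) * (-1) ^ (j + k)
        * q ^ (((j:ℤ)+(k:ℤ)+(l:ℤ)) * ((j:ℤ)+(k:ℤ)+(l:ℤ)-1) + (l:ℤ)^2 + (j:ℤ) + (k:ℤ) + 2*(l:ℤ))
        / (qp q q j * qp (q^2) (q^2) k * qp (q^2) (q^2) l))
    = qpInf q (q^2) * qpInf (q^2 * x) (q^2) := by
  have hQ : ‖q ^ 2‖ < 1 := by rw [norm_pow]; exact pow_lt_one₀ (norm_nonneg q) hq two_ne_zero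
  have hsum := summable_weighted_coeff_mul_mul (w := fun n => (-1) ^ n * q ^ (n ^ 2))
    (norm_nonneg q) hq (norm_neg_one_pow_mul_pow_sq_le hq)
    (norm_coeff_rescale_le (norm_coeff_qBinomialSeries_le hq 0) x)
    (norm_coeff_qBinomialSeries_le hQ x)
    (norm_coeff_rescale_le (fun n => (norm_coeff_eulerSeries_le hQ n).trans
      (mul_le_of_le_one_right (by positivity) (pow_le_one₀ (norm_nonneg _) hQ.le)))
      (-(x * q ^ 2)))
  have hregroup := HasSum.weighted_coeff_mul_mul (R := ℂ) (w := fun n => (-1) ^ n * q ^ (n ^ 2))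
    (φ := rescale x (qBinomialSeries 0 q)) (ψ := qBinomialSeries x (q ^ 2))
    (χ := rescale (-(x * q ^ 2)) (eulerSeries (q ^ 2))) hsum.hasSum
  rw [rescale_qBinomialSeries_zero_mul_qBinomialSeries_mul_rescale_eulerSeries
    (not_isOfFinOrder_of_norm_lt_one hq)] at hregroup
  have hfinal := HasSum.weighted_coeff_mul (R := ℂ) (w := fun n => (-1) ^ n * q ^ (n ^ 2))
    (hasSum_weighted_coeff_qBinomialSeries_mul hq x)
  rw [← hregroup.unique hfinal, hsum.tsum_prod]
  refine tsum_congr fun j => ?_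
  rw [(hsum.prod_factor j).tsum_prod]
  exact tsum_congr fun k => tsum_congr fun l => summand_eq_weighted_coeff q x j k l
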